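/- (Theorem 2, asymptotic normality) Suppose √n·τ_{g,n}² → ∞ and log(τ_{g,n}²)/n → 0 for every group g. Let A ⊆ {1,…,p} be the set of coordinates belonging to the true active groups 𝒜 = {g : β⁰_g ≠ 0}. Then the law under μ_n of the rescaled error √n·(β̂_{n,A}^Med − β⁰_A) ∈ ℝ^{|A|} converges weakly (i.e., in distribution) to the product Gaussian measure ⊗_{i∈A} N(0, σ²) as n → ∞. -/

import Mathlib

open MeasureTheory ProbabilityTheory Filter Classical
open scoped ENNReal

/-- The standard normal cumulative distribution function `Φ`. -/
noncomputable def stdNormalCDF (x : ℝ) : ℝ :=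
  (gaussianReal 0 1 (Set.Iic x)).toReal

/-- The standard normal quantile function `Φ⁻¹`. -/
noncomputable def stdNormalQuantile (p : ℝ) : ℝ :=
  sInf {x : ℝ | p ≤ stdNormalCDF x}

/-!
Couple all sample sizes on one probability space: if `Y ∼ ⊗ N(0, σ²)`, then `β⁰ + Y / √n` has
law `μ_n`. For an active group the spike probability `l_{g,n}` tends to `0`, because the log of
the slab-to-spike odds grows like `n ‖β⁰_g‖² / (2σ²)` while `log (1 + n τ²) = o(n)`; hence the
threshold `Q_{g,n} = Φ⁻¹(1 / (2 (1 - l_{g,n})))` tends to `Φ⁻¹(1/2) = 0`. Shrinkage and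
thresholding move the estimate by at most `B_{g,n} |x| + σ Q_{g,n} / √n = o(1 / √n)`, as
`√n τ² → ∞`, so `√n (β̂^Med - β⁰) → Y` pointwise on the active coordinates, and dominated
convergence concludes.
-/

open Set Topology

lemma stdNormalCDF_eq_cdf : stdNormalCDF = cdf (gaussianReal 0 1) := by
  ext x
  rw [cdf_eq_real]
  rfl

lemma stdNormalCDF_mono : Monotone stdNormalCDF :=
  stdNormalCDF_eq_cdf ▸ monotone_cdf _

lemma stdGaussian_measureReal_pos {s : Set ℝ} (hs : volume s ≠ 0) : 0 < (gaussianReal 0 1).real s :=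
  ENNReal.toReal_pos (fun h => hs (gaussianReal_absolutelyContinuous' 0 one_ne_zero h))
    (measure_ne_top _ _)

lemma stdNormalCDF_add_measureReal_Ioi (x : ℝ) :
    stdNormalCDF x + (gaussianReal 0 1).real (Ioi x) = 1 := by
  rw [← compl_Iic, probReal_compl_eq_one_sub measurableSet_Iic]
  unfold stdNormalCDF
  rw [measureReal_def]
  ring

lemma stdNormalCDF_lt_one (x : ℝ) : stdNormalCDF x < 1 := by
  have := stdGaussian_measureReal_pos (s := Ioi x) (by simp)
  linarith [stdNormalCDF_add_measureReal_Ioi x]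

lemma stdNormalCDF_zero : stdNormalCDF 0 = 1 / 2 := by
  have h_symm : (gaussianReal 0 1).real (Ioi 0) = (gaussianReal 0 1).real (Iio 0) := by
    conv_rhs => rw [← neg_zero, ← gaussianReal_map_neg]
    rw [map_measureReal_apply (by fun_prop) measurableSet_Iio]
    congr 1
    ext t
    simp
  have h_atom : (gaussianReal 0 1).real (Iio 0) = stdNormalCDF 0 :=
    measureReal_congr
      (Iio_ae_eq_Iic' (gaussianReal_absolutelyContinuous 0 one_ne_zero Real.volume_singleton))
  linarith [stdNormalCDF_add_measureReal_Ioi 0]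

lemma half_lt_stdNormalCDF {ε : ℝ} (hε : 0 < ε) : 1 / 2 < stdNormalCDF ε := by
  have h_split : stdNormalCDF ε = stdNormalCDF 0 + (gaussianReal 0 1).real (Ioc 0 ε) := by
    unfold stdNormalCDF
    rw [← Iic_union_Ioc_eq_Iic hε.le, measureReal_def, measure_union (Iic_disjoint_Ioc le_rfl)
      measurableSet_Ioc, ENNReal.toReal_add (measure_ne_top _ _) (measure_ne_top _ _)]
  have := stdGaussian_measureReal_pos (s := Ioc 0 ε) (by simp [hε])
  linarith [stdNormalCDF_zero]

lemma pos_of_half_lt_stdNormalCDF {x : ℝ} (h : 1 / 2 < stdNormalCDF x) : 0 < x := by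
  by_contra! hx
  linarith [stdNormalCDF_zero ▸ stdNormalCDF_mono hx]

lemma stdNormalQuantile_nonneg {p : ℝ} (hp : 1 / 2 < p) : 0 ≤ stdNormalQuantile p :=
  Real.sInf_nonneg fun _ hx => (pos_of_half_lt_stdNormalCDF (hp.trans_le hx)).le

lemma stdNormalQuantile_le {p x : ℝ} (hp : 1 / 2 < p) (hx : p ≤ stdNormalCDF x) :
    stdNormalQuantile p ≤ x :=
  csInf_le ⟨0, fun _ hy => (pos_of_half_lt_stdNormalCDF (hp.trans_le hy)).le⟩ hx

lemma tendsto_stdNormalQuantile_nhdsGT_half :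
    Tendsto stdNormalQuantile (𝓝[>] (1 / 2)) (𝓝 0) := by
  refine tendsto_order.2 ⟨fun a ha => ?_, fun a ha => ?_⟩
  · filter_upwards [self_mem_nhdsWithin] with q hq
    exact ha.trans_le (stdNormalQuantile_nonneg hq)
  · filter_upwards [self_mem_nhdsWithin,
      nhdsWithin_le_nhds (eventually_lt_nhds (half_lt_stdNormalCDF (half_pos ha)))] with q hq hqa
    exact (stdNormalQuantile_le hq hqa.le).trans_lt (half_lt_self ha)

lemma stdNormalQuantile_monotoneOn : MonotoneOn stdNormalQuantile (Ioo 0 1) := by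
  intro p hp q hq hpq
  obtain ⟨x₀, hx₀⟩ := ((stdNormalCDF_eq_cdf ▸ tendsto_cdf_atBot _).eventually_lt_const
    hp.1).exists
  refine csInf_le_csInf ⟨x₀, fun x hx => ?_⟩ ?_ fun x hx => hpq.trans hx
  · by_contra! h
    exact (hx.trans (stdNormalCDF_mono h.le)).not_gt hx₀
  · exact ((stdNormalCDF_eq_cdf ▸ tendsto_cdf_atTop _).eventually_const_le hq.2).exists

lemma stdNormalQuantile_eq_zero_of_notMem {p : ℝ} (hp : p ∉ Ioo 0 1) :
    stdNormalQuantile p = 0 := by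
  rcases not_and_or.1 hp with hp | hp
  · have h_univ : {x | p ≤ stdNormalCDF x} = univ :=
      eq_univ_of_forall fun x => (not_lt.1 hp).trans ENNReal.toReal_nonneg
    rw [stdNormalQuantile, h_univ, Real.sInf_univ]
  · have h_empty : {x | p ≤ stdNormalCDF x} = ∅ := eq_empty_of_forall_notMem fun x hx =>
      (stdNormalCDF_lt_one x).not_ge ((not_lt.1 hp).trans hx)
    rw [stdNormalQuantile, h_empty, Real.sInf_empty]

@[fun_prop]
lemma measurable_stdNormalQuantile : Measurable stdNormalQuantile := by
  have h_mono : Monotone ((Ioo (0 : ℝ) 1).domRestrict stdNormalQuantile) :=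
    fun x y hxy => stdNormalQuantile_monotoneOn x.2 y.2 hxy
  have h_zero : (Ioo (0 : ℝ) 1)ᶜ.domRestrict stdNormalQuantile = fun _ => 0 :=
    funext fun x => stdNormalQuantile_eq_zero_of_notMem x.2
  exact measurable_of_restrict_of_restrict_compl measurableSet_Ioo h_mono.measurable
    (h_zero ▸ measurable_const)

/- In the notation of the model: `shrinkage τ² n = B_{g,n}`, `spikeProb π₀ σ τ² m n r = l_{g,n}`
for a group of size `m` with `‖β̂_g‖ = r`, `medianQuantile l_{g,n} = Q_{g,n}`, and
`medianThreshold σ B l x n` is the coordinate of `β̂^Med` computed from `β̂^LS = x`. -/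
noncomputable def shrinkage (τ2 : ℝ) (n : ℕ) : ℝ := 1 / (1 + n * τ2)

noncomputable def spikeProb (π₀ σ τ2 : ℝ) (m n : ℕ) (r : ℝ) : ℝ :=
  π₀ / (π₀ + (1 - π₀) * (1 + n * τ2) ^ (-(m : ℝ) / 2) *
    Real.exp ((1 - shrinkage τ2 n) * n * r ^ 2 / (2 * σ ^ 2)))

noncomputable def medianQuantile (l : ℝ) : ℝ := stdNormalQuantile (1 / (2 * (1 - min (1 / 2) l)))

noncomputable def medianThreshold (σ b l x : ℝ) (n : ℕ) : ℝ :=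
  if 1 / 2 ≤ l then 0 else
    Real.sign x * max ((1 - b) * |x| - σ / √n * medianQuantile l * √(1 - b)) 0

lemma tendsto_medianQuantile_nhdsGT_zero : Tendsto medianQuantile (𝓝[>] 0) (𝓝 0) := by
  refine tendsto_stdNormalQuantile_nhdsGT_half.comp
    (tendsto_nhdsWithin_of_tendsto_nhds_of_eventually_within _ ?_ ?_)
  · refine tendsto_nhdsWithin_of_tendsto_nhds (Continuous.tendsto' ?_ 0 _ (by norm_num))
    exact continuous_const.div (by fun_prop) fun t => by
      linarith [min_le_left (1 / 2 : ℝ) t]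
  · filter_upwards [self_mem_nhdsWithin] with t (ht : 0 < t)
    have h_min : 0 < min (1 / 2 : ℝ) t := lt_min (by norm_num) ht
    show 1 / 2 < 1 / (2 * (1 - min (1 / 2) t))
    rw [one_div_lt_one_div (by norm_num) (by linarith [min_le_left (1 / 2 : ℝ) t])]
    linarith

lemma abs_softThreshold_sub_le (a b t : ℝ) (ha : 0 ≤ a) (hb : 0 ≤ b) :
    |max ((1 - b) * a - t) 0 - a| ≤ b * a + |t| :=
  calc |max ((1 - b) * a - t) 0 - a| = |max ((1 - b) * a - t) 0 - max a 0| := by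
        rw [max_eq_left ha]
    _ ≤ |(1 - b) * a - t - a| := abs_max_sub_max_le_abs _ _ _
    _ = |b * a + t| := by rw [← abs_neg]; ring_nf
    _ ≤ b * a + |t| := by
        simpa only [abs_of_nonneg (mul_nonneg hb ha)] using abs_add_le (b * a) t

lemma abs_sign_mul_softThreshold_sub_le (x b t : ℝ) (hb : 0 ≤ b) :
    |Real.sign x * max ((1 - b) * |x| - t) 0 - x| ≤ b * |x| + |t| := by
  rcases lt_trichotomy x 0 with hx | rfl | hx
  · rw [Real.sign_of_neg hx, abs_of_neg hx, neg_one_mul, ← neg_add', abs_neg, ← sub_neg_eq_add]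
    exact abs_softThreshold_sub_le _ _ _ (neg_nonneg.2 hx.le) hb
  · simp
  · rw [Real.sign_of_pos hx, one_mul, abs_of_pos hx]
    exact abs_softThreshold_sub_le _ _ _ hx.le hb

lemma tendsto_sqrt_mul_softThreshold_sub {x q b : ℕ → ℝ} {x₀ σ : ℝ}
    (hx : Tendsto x atTop (𝓝 x₀)) (hq : Tendsto q atTop (𝓝 0)) (hb₀ : ∀ n, 0 ≤ b n)
    (hb : Tendsto (fun n : ℕ => √n * b n) atTop (𝓝 0)) :
    Tendsto (fun n : ℕ => √n * (Real.sign (x n) *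
      max ((1 - b n) * |x n| - σ / √n * q n * √(1 - b n)) 0 - x n)) atTop (𝓝 0) := by
  have h_bound : Tendsto (fun n : ℕ => √n * b n * |x n| + |σ| * |q n|) atTop (𝓝 0) := by
    simpa using (hb.mul hx.abs).add (hq.abs.const_mul |σ|)
  refine squeeze_zero_norm' ?_ h_bound
  filter_upwards [eventually_ne_atTop 0] with n hn
  have h_sqrt : 0 < √(n : ℝ) := Real.sqrt_pos.2 (by positivity)
  have h_shrink : √(1 - b n) ≤ 1 := Real.sqrt_le_one.2 (by linarith [hb₀ n])
  rw [norm_mul, Real.norm_of_nonneg h_sqrt.le]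
  calc √n * |Real.sign (x n) * max ((1 - b n) * |x n| - σ / √n * q n * √(1 - b n)) 0 - x n|
      ≤ √n * (b n * |x n| + |σ / √n * q n * √(1 - b n)|) :=
        mul_le_mul_of_nonneg_left (abs_sign_mul_softThreshold_sub_le _ _ _ (hb₀ n)) h_sqrt.le
    _ = √n * b n * |x n| + |σ| * |q n| * √(1 - b n) := by
        rw [abs_mul, abs_mul, abs_div, abs_of_pos h_sqrt, abs_of_nonneg (Real.sqrt_nonneg _)]
        field_simp
    _ ≤ √n * b n * |x n| + |σ| * |q n| :=
        add_le_add le_rfl (mul_le_of_le_one_right (by positivity) h_shrink)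

lemma tendsto_of_tendsto_sqrt_mul {b : ℕ → ℝ} (hb₀ : ∀ n, 0 ≤ b n)
    (hb : Tendsto (fun n : ℕ => √n * b n) atTop (𝓝 0)) : Tendsto b atTop (𝓝 0) := by
  refine squeeze_zero' (.of_forall hb₀) ?_ hb
  filter_upwards [eventually_ne_atTop 0] with n hn
  exact le_mul_of_one_le_left (hb₀ n)
    (Real.one_le_sqrt.2 (by exact_mod_cast Nat.one_le_iff_ne_zero.2 hn))

lemma shrinkage_nonneg {τ2 : ℝ} (hτ2 : 0 ≤ τ2) (n : ℕ) : 0 ≤ shrinkage τ2 n := by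
  unfold shrinkage
  positivity

lemma tendsto_sqrt_mul_shrinkage {τ : ℕ → ℝ} (hτ : ∀ n, 0 < τ n)
    (h : Tendsto (fun n : ℕ => √n * τ n) atTop atTop) :
    Tendsto (fun n : ℕ => √n * shrinkage (τ n) n) atTop (𝓝 0) := by
  refine squeeze_zero' (.of_forall fun n => mul_nonneg (Real.sqrt_nonneg _)
    (shrinkage_nonneg (hτ n).le n)) ?_ (tendsto_inv_atTop_zero.comp h)
  filter_upwards [eventually_ne_atTop 0] with n hn
  have h_sqrt : 0 < √(n : ℝ) := Real.sqrt_pos.2 (by positivity)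
  have := hτ n
  rw [Function.comp_apply, shrinkage, mul_one_div, div_le_iff₀ (by positivity), inv_mul_eq_div,
    le_div_iff₀ (by positivity)]
  nlinarith [Real.mul_self_sqrt (Nat.cast_nonneg n : (0 : ℝ) ≤ n)]

lemma tendsto_log_one_add_natCast_div :
    Tendsto (fun n : ℕ => Real.log (1 + n) / n) atTop (𝓝 0) := by
  have h := (Real.tendsto_pow_log_div_mul_add_atTop 1 (-1) 1 one_ne_zero).comp
    (tendsto_atTop_add_const_left _ 1 tendsto_natCast_atTop_atTop)
  refine h.congr fun n => ?_
  simp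

lemma tendsto_log_one_add_mul_div {τ : ℕ → ℝ} (hτ : ∀ n, 0 < τ n)
    (h : Tendsto (fun n : ℕ => Real.log (τ n) / n) atTop (𝓝 0)) :
    Tendsto (fun n : ℕ => Real.log (1 + n * τ n) / n) atTop (𝓝 0) := by
  have h_bound := tendsto_log_one_add_natCast_div.add h.abs
  rw [abs_zero, add_zero] at h_bound
  refine squeeze_zero (fun n => ?_) (fun n => ?_) h_bound
  · exact div_nonneg (Real.log_nonneg (by have := hτ n; nlinarith [n.cast_nonneg (α := ℝ)]))
      n.cast_nonneg
  · rw [abs_div, Nat.abs_cast, ← add_div]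
    gcongr
    calc Real.log (1 + n * τ n) ≤ Real.log ((1 + n) * max 1 (τ n)) := by
          gcongr
          · have := hτ n; positivity
          · nlinarith [le_max_left 1 (τ n), le_max_right 1 (τ n), n.cast_nonneg (α := ℝ)]
      _ = Real.log (1 + n) + Real.log (max 1 (τ n)) :=
          Real.log_mul (by positivity) (by positivity)
      _ ≤ Real.log (1 + n) + |Real.log (τ n)| := by
          gcongr
          rcases le_total (τ n) 1 with hτ₁ | hτ₁
          · simp [max_eq_left hτ₁]
          · rw [max_eq_right hτ₁]
            exact le_abs_self _

lemma tendsto_atTop_of_tendsto_log_div {D : ℕ → ℝ} {c : ℝ} (hD : ∀ n, 0 < D n) (hc : 0 < c)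
    (h : Tendsto (fun n : ℕ => Real.log (D n) / n) atTop (𝓝 c)) : Tendsto D atTop atTop := by
  have h_log : Tendsto (fun n => Real.log (D n)) atTop atTop := by
    refine (h.pos_mul_atTop hc tendsto_natCast_atTop_atTop).congr' ?_
    filter_upwards [eventually_ne_atTop 0] with n hn
    field_simp
  exact (Real.tendsto_exp_atTop.comp h_log).congr fun n => Real.exp_log (hD n)

lemma tendsto_spikeProb {π₀ σ R : ℝ} {m : ℕ} {τ r : ℕ → ℝ} (hπ₀ : 0 < π₀) (hπ₁ : π₀ < 1)
    (hσ : σ ≠ 0) (hτ : ∀ n, 0 < τ n) (hτlim : Tendsto (fun n : ℕ => √n * τ n) atTop atTop)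
    (hτlog : Tendsto (fun n : ℕ => Real.log (τ n) / n) atTop (𝓝 0))
    (hr : Tendsto r atTop (𝓝 R)) (hR : R ≠ 0) :
    Tendsto (fun n : ℕ => spikeProb π₀ σ (τ n) m n (r n)) atTop (𝓝[>] 0) := by
  set κ : ℝ := -(m : ℝ) / 2
  set b : ℕ → ℝ := fun n => shrinkage (τ n) n
  set D : ℕ → ℝ := fun n => (1 - π₀) * (1 + n * τ n) ^ κ *
    Real.exp ((1 - b n) * n * r n ^ 2 / (2 * σ ^ 2))
  have hb : Tendsto b atTop (𝓝 0) := tendsto_of_tendsto_sqrt_mul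
    (fun n => shrinkage_nonneg (hτ n).le n) (tendsto_sqrt_mul_shrinkage hτ hτlim)
  have h_one_add : ∀ n : ℕ, 0 < 1 + n * τ n := fun n => by have := hτ n; positivity
  have h_coef : ∀ n : ℕ, 0 < (1 - π₀) * (1 + n * τ n) ^ κ := fun n =>
    mul_pos (by linarith) (Real.rpow_pos_of_pos (h_one_add n) κ)
  have hD : ∀ n, 0 < D n := fun n => mul_pos (h_coef n) (Real.exp_pos _)
  have h_logD : Tendsto (fun n : ℕ => Real.log (D n) / n) atTop (𝓝 (R ^ 2 / (2 * σ ^ 2))) := by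
    have h_lim := ((tendsto_const_div_atTop_nhds_zero_nat (Real.log (1 - π₀))).add
      ((tendsto_log_one_add_mul_div hτ hτlog).const_mul κ)).add
      ((((tendsto_const_nhds (x := (1 : ℝ))).sub hb).mul (hr.pow 2)).div_const (2 * σ ^ 2))
    rw [mul_zero, add_zero, zero_add, sub_zero, one_mul] at h_lim
    refine h_lim.congr' ?_
    filter_upwards [eventually_ne_atTop 0] with n hn
    rw [Real.log_mul (h_coef n).ne' (Real.exp_ne_zero _),
      Real.log_mul (by linarith) (Real.rpow_pos_of_pos (h_one_add n) κ).ne',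
      Real.log_rpow (h_one_add n), Real.log_exp]
    field_simp
  have hD_top := tendsto_atTop_of_tendsto_log_div hD (by positivity) h_logD
  refine tendsto_nhdsWithin_iff.2 ⟨?_, .of_forall fun n => div_pos hπ₀ (by linarith [hD n])⟩
  exact tendsto_const_nhds.div_atTop (tendsto_atTop_add_const_left _ π₀ hD_top)

lemma tendsto_add_inv_sqrt_mul (x₀ y : ℝ) :
    Tendsto (fun n : ℕ => x₀ + (√n)⁻¹ * y) atTop (𝓝 x₀) := by
  simpa using ((tendsto_inv_atTop_zero.comp (Real.tendsto_sqrt_atTop.comp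
    tendsto_natCast_atTop_atTop)).mul_const y).const_add x₀

lemma tendsto_sqrt_mul_medianThreshold_sub {x₀ y σ : ℝ} {b l : ℕ → ℝ} (hb₀ : ∀ n, 0 ≤ b n)
    (hb : Tendsto (fun n : ℕ => √n * b n) atTop (𝓝 0)) (hl : Tendsto l atTop (𝓝[>] 0)) :
    Tendsto (fun n : ℕ => √n * (medianThreshold σ (b n) (l n) (x₀ + (√n)⁻¹ * y) n - x₀))
      atTop (𝓝 y) := by
  have hq := tendsto_medianQuantile_nhdsGT_zero.comp hl
  have h_lim := (tendsto_sqrt_mul_softThreshold_sub (σ := σ) (tendsto_add_inv_sqrt_mul x₀ y)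
    hq hb₀ hb).add_const y
  rw [zero_add] at h_lim
  refine h_lim.congr' ?_
  filter_upwards [eventually_ne_atTop 0,
    (hl.mono_right nhdsWithin_le_nhds).eventually_lt_const one_half_pos] with n hn hln
  have h_sqrt_ne : √(n : ℝ) ≠ 0 := (Real.sqrt_pos.2 (by positivity)).ne'
  rw [medianThreshold, if_neg hln.not_ge, Function.comp_apply]
  field_simp
  ring

lemma tendsto_sqrt_mul_medianThreshold_spikeProb_sub {σ π₀ x₀ y R : ℝ} {m : ℕ} {τ r : ℕ → ℝ}
    (hσ : σ ≠ 0) (hπ₀ : 0 < π₀) (hπ₁ : π₀ < 1) (hτ : ∀ n, 0 < τ n)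
    (hτlim : Tendsto (fun n : ℕ => √n * τ n) atTop atTop)
    (hτlog : Tendsto (fun n : ℕ => Real.log (τ n) / n) atTop (𝓝 0))
    (hr : Tendsto r atTop (𝓝 R)) (hR : R ≠ 0) :
    Tendsto (fun n : ℕ => √n * (medianThreshold σ (shrinkage (τ n) n)
      (spikeProb π₀ σ (τ n) m n (r n)) (x₀ + (√n)⁻¹ * y) n - x₀)) atTop (𝓝 y) :=
  tendsto_sqrt_mul_medianThreshold_sub (fun n => shrinkage_nonneg (hτ n).le n)
    (tendsto_sqrt_mul_shrinkage hτ hτlim) (tendsto_spikeProb hπ₀ hπ₁ hσ hτ hτlim hτlog hr hR)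

@[fun_prop]
lemma Real.measurable_sign : Measurable Real.sign :=
  Measurable.ite measurableSet_Iio measurable_const
    (Measurable.ite measurableSet_Ioi measurable_const measurable_const)

lemma MeasureTheory.MeasurePreserving.integral_comp_of_aestronglyMeasurable {α β E : Type*}
    [MeasurableSpace α] [MeasurableSpace β] [NormedAddCommGroup E] [NormedSpace ℝ E]
    {μ : Measure α} {ν : Measure β} {f : α → β} (hf : MeasurePreserving f μ ν) {g : β → E}
    (hg : AEStronglyMeasurable g ν) :
    ∫ x, g (f x) ∂μ = ∫ y, g y ∂ν := by
  rw [← hf.map_eq] at hg ⊢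
  exact (integral_map hf.aemeasurable hg).symm

lemma measurePreserving_affine_pi_gaussianReal {ι : Type*} [Fintype ι] (m : ι → ℝ) (c : ℝ)
    (v : NNReal) :
    MeasurePreserving (fun y i => m i + c * y i) (Measure.pi fun _ : ι => gaussianReal 0 v)
      (Measure.pi fun i => gaussianReal (m i) (.mk (c ^ 2) (sq_nonneg c) * v)) := by
  refine measurePreserving_pi _ _ (f := fun i t => m i + c * t) fun i => ⟨by fun_prop, ?_⟩
  change (gaussianReal 0 v).map ((m i + ·) ∘ (c * ·)) = _
  rw [← Measure.map_map (by fun_prop) (by fun_prop), gaussianReal_map_const_mul,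
    gaussianReal_map_const_add, mul_zero, zero_add]

lemma measurePreserving_add_inv_sqrt_mul_pi_gaussianReal {ι : Type*} [Fintype ι] (m : ι → ℝ)
    (v : NNReal) (n : ℕ) :
    MeasurePreserving (fun y i => m i + (√n)⁻¹ * y i) (Measure.pi fun _ : ι => gaussianReal 0 v)
      (Measure.pi fun i => gaussianReal (m i) (v / n : ℝ).toNNReal) := by
  have h_var : (v / n : ℝ).toNNReal = .mk ((√n)⁻¹ ^ 2) (sq_nonneg _) * v := by
    ext
    rw [Real.coe_toNNReal _ (by positivity), NNReal.coe_mul, NNReal.coe_mk, inv_pow,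
      Real.sq_sqrt n.cast_nonneg, div_eq_inv_mul]
  rw [h_var]
  exact measurePreserving_affine_pi_gaussianReal m (√n)⁻¹ v

lemma measurePreserving_subtype_restrict_pi {ι : Type*} [Fintype ι] {X : ι → Type*}
    [∀ i, MeasurableSpace (X i)] (μ : ∀ i, Measure (X i)) [∀ i, IsProbabilityMeasure (μ i)]
    (P : ι → Prop) [DecidablePred P] :
    MeasurePreserving (fun x (i : Subtype P) => x i) (Measure.pi μ)
      (Measure.pi fun i : Subtype P => μ i) :=
  measurePreserving_fst.comp (measurePreserving_piEquivPiSubtypeProd μ P)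

lemma tendsto_integral_of_measurePreserving_coupling {α β E : Type*} [MeasurableSpace α]
    [MeasurableSpace β] [TopologicalSpace E] [MeasurableSpace E] [OpensMeasurableSpace E]
    {ν : Measure α} [IsFiniteMeasure ν] {μ : ℕ → Measure β} {X : ℕ → α → β}
    (hX : ∀ n, MeasurePreserving (X n) ν (μ n)) {G : ℕ → β → E} (hG : ∀ n, Measurable (G n))
    {F : α → E} (h : ∀ y, Tendsto (fun n => G n (X n y)) atTop (𝓝 (F y)))
    (φ : BoundedContinuousFunction E ℝ) :
    Tendsto (fun n => ∫ x, φ (G n x) ∂μ n) atTop (𝓝 (∫ y, φ (F y) ∂ν)) := by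
  have h_comp : ∀ n, ∫ x, φ (G n x) ∂μ n = ∫ y, φ (G n (X n y)) ∂ν := fun n =>
    ((hX n).integral_comp_of_aestronglyMeasurable
      (φ.continuous.measurable.comp (hG n)).aestronglyMeasurable).symm
  simp only [h_comp]
  exact tendsto_integral_of_dominated_convergence (fun _ => ‖φ‖)
    (fun n => (φ.continuous.measurable.comp ((hG n).comp (hX n).measurable)).aestronglyMeasurable)
    (integrable_const _) (fun _ => .of_forall fun _ => φ.norm_coe_le_norm _)
    (.of_forall fun y => (φ.continuous.tendsto _).comp (h y))

theorem median_thresholding_asymptotic_normality_general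
    (p G : ℕ) (gr : Fin p → Fin G)
    (β0 : Fin p → ℝ) (σ : ℝ) (hσ : 0 < σ)
    (π₀ : ℝ) (hπ₀ : 0 < π₀) (hπ₁ : π₀ < 1)
    (τ2 : Fin G → ℕ → ℝ) (hτ2 : ∀ g n, 0 < τ2 g n)
    (hτlim : ∀ g, Tendsto (fun n : ℕ => Real.sqrt (n : ℝ) * τ2 g n) atTop atTop)
    (hτlog : ∀ g, Tendsto (fun n : ℕ => Real.log (τ2 g n) / (n : ℝ)) atTop (nhds 0))
    (μ : ℕ → Measure (Fin p → ℝ))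
    (hμ : ∀ n, μ n =
      Measure.pi (fun i : Fin p => gaussianReal (β0 i) (Real.toNNReal (σ ^ 2 / n))))
    (bnorm : Fin G → (Fin p → ℝ) → ℝ)
    (hbnorm : ∀ g x, bnorm g x =
      Real.sqrt (∑ i ∈ Finset.univ.filter (fun i => gr i = g), x i ^ 2))
    (B : Fin G → ℕ → ℝ)
    (hB : ∀ g n, B g n = 1 / (1 + (n : ℝ) * τ2 g n))
    (l : Fin G → ℕ → (Fin p → ℝ) → ℝ)
    (hl : ∀ g n x, l g n x = π₀ /
      (π₀ + (1 - π₀) *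
        (1 + (n : ℝ) * τ2 g n) ^
          (-((Finset.univ.filter (fun i => gr i = g)).card : ℝ) / 2) *
        Real.exp ((1 - B g n) * (n : ℝ) * bnorm g x ^ 2 / (2 * σ ^ 2))))
    (Q : Fin G → ℕ → (Fin p → ℝ) → ℝ)
    (hQ : ∀ g n x, Q g n x =
      stdNormalQuantile (1 / (2 * (1 - min (1 / 2) (l g n x)))))
    (med : ℕ → (Fin p → ℝ) → (Fin p → ℝ))
    (hmed : ∀ n x i, med n x i =
      if 1 / 2 ≤ l (gr i) n x then 0
      else Real.sign (x i) *
        max ((1 - B (gr i) n) * |x i| -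
          σ / Real.sqrt (n : ℝ) * Q (gr i) n x * Real.sqrt (1 - B (gr i) n)) 0) :
    ∀ φ : BoundedContinuousFunction
        ({i : Fin p // ∃ i', gr i' = gr i ∧ β0 i' ≠ 0} → ℝ) ℝ,
      Tendsto
        (fun n => ∫ x,
          φ (fun i => Real.sqrt (n : ℝ) * (med n x i.1 - β0 i.1)) ∂(μ n))
        atTop
        (nhds (∫ y, φ y ∂(Measure.pi
          (fun _ : {i : Fin p // ∃ i', gr i' = gr i ∧ β0 i' ≠ 0} =>
            gaussianReal 0 ⟨σ ^ 2, sq_nonneg σ⟩)))) := by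
  intro φ
  have h_med : ∀ n x i, med n x i = medianThreshold σ (shrinkage (τ2 (gr i) n) n)
      (spikeProb π₀ σ (τ2 (gr i) n) (Finset.univ.filter (fun j => gr j = gr i)).card n
        (bnorm (gr i) x)) (x i) n := fun n x i => by
    rw [hmed, hQ, hl, hB]
    rfl
  have h_cont : ∀ g, Continuous (bnorm g) := fun g => by
    rw [show bnorm g = _ from funext (hbnorm g)]
    fun_prop
  have h_meas : ∀ n i, Measurable fun x => med n x i := fun n i => by
    simp only [h_med, medianThreshold, medianQuantile, spikeProb]
    exact Measurable.ite (measurableSet_le (by fun_prop) (by fun_prop)) (by fun_prop) (by fun_prop)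
  have h_active : ∀ i, (∃ i', gr i' = gr i ∧ β0 i' ≠ 0) → bnorm (gr i) β0 ≠ 0 := by
    rintro i ⟨i', hgi', hi'⟩
    rw [hbnorm]
    exact Real.sqrt_ne_zero'.2
      (Finset.sum_pos' (fun _ _ => sq_nonneg _) ⟨i', by simp [hgi'], by positivity⟩)
  have h_lim : ∀ (y : Fin p → ℝ) (i : {i : Fin p // ∃ i', gr i' = gr i ∧ β0 i' ≠ 0}),
      Tendsto (fun n : ℕ => √n * (med n (fun j => β0 j + (√n)⁻¹ * y j) i - β0 i)) atTop
        (𝓝 (y i)) := fun y i => by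
    simp only [h_med]
    exact tendsto_sqrt_mul_medianThreshold_spikeProb_sub hσ.ne' hπ₀ hπ₁ (hτ2 _) (hτlim _)
      (hτlog _) (((h_cont _).tendsto β0).comp (tendsto_pi_nhds.2 fun j =>
        tendsto_add_inv_sqrt_mul _ _)) (h_active i i.2)
  -- `⟨σ ^ 2, _⟩` elaborates at type `{r // 0 ≤ r}`, where the `NNReal` instances are not found
  set v : NNReal := ⟨σ ^ 2, sq_nonneg σ⟩
  rw [← (measurePreserving_subtype_restrict_pi (fun _ : Fin p => gaussianReal 0 v) _
    ).integral_comp_of_aestronglyMeasurable φ.continuous.aestronglyMeasurable]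
  refine tendsto_integral_of_measurePreserving_coupling (fun n => ?_) (fun n => ?_)
    (fun y => tendsto_pi_nhds.2 (h_lim y)) φ
  · rw [hμ]
    exact measurePreserving_add_inv_sqrt_mul_pi_gaussianReal β0 v n
  · exact measurable_pi_lambda _ fun i => ((h_meas n i).sub_const _).const_mul _

/-- **Theorem 2, asymptotic normality of median thresholding.**
In the orthogonal-design Gaussian sampling model `μ_n = ⊗_i N(β⁰_i, σ²/n)`, with the
median thresholding estimator `β̂^Med` defined from the spike-and-slab posterior
(shrinkage `B_{g,n}`, spike probability `l_{g,n}`, threshold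
`Q_{g,n} = Φ⁻¹(1/(2(1 - min(1/2, l_{g,n}))))`, estimator set to `0` for group `g`
when `l_{g,n} ≥ 1/2`), if `√n τ_{g,n}² → ∞` and `log(τ_{g,n}²)/n → 0` for every
group `g`, then the law under `μ_n` of `√n (β̂^Med_{n,A} - β⁰_A)`, where `A` is the
set of coordinates in the true active groups, converges weakly to `⊗_{i ∈ A} N(0, σ²)`:
for every bounded continuous test function `φ`, the expectations converge. -/
theorem median_thresholding_asymptotic_normality
    (p G : ℕ) (gr : Fin p → Fin G) (hgr : Function.Surjective gr)
    (β0 : Fin p → ℝ) (σ : ℝ) (hσ : 0 < σ)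
    (π₀ : ℝ) (hπ₀ : 0 < π₀) (hπ₁ : π₀ < 1)
    (τ2 : Fin G → ℕ → ℝ) (hτ2 : ∀ g n, 0 < τ2 g n)
    (hτlim : ∀ g, Tendsto (fun n : ℕ => Real.sqrt (n : ℝ) * τ2 g n) atTop atTop)
    (hτlog : ∀ g, Tendsto (fun n : ℕ => Real.log (τ2 g n) / (n : ℝ)) atTop (nhds 0))
    (μ : ℕ → Measure (Fin p → ℝ))
    (hμ : ∀ n, μ n =
      Measure.pi (fun i : Fin p => gaussianReal (β0 i) (Real.toNNReal (σ ^ 2 / n))))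
    (bnorm : Fin G → (Fin p → ℝ) → ℝ)
    (hbnorm : ∀ g x, bnorm g x =
      Real.sqrt (∑ i ∈ Finset.univ.filter (fun i => gr i = g), x i ^ 2))
    (B : Fin G → ℕ → ℝ)
    (hB : ∀ g n, B g n = 1 / (1 + (n : ℝ) * τ2 g n))
    (l : Fin G → ℕ → (Fin p → ℝ) → ℝ)
    (hl : ∀ g n x, l g n x = π₀ /
      (π₀ + (1 - π₀) *
        (1 + (n : ℝ) * τ2 g n) ^
          (-((Finset.univ.filter (fun i => gr i = g)).card : ℝ) / 2) *
        Real.exp ((1 - B g n) * (n : ℝ) * bnorm g x ^ 2 / (2 * σ ^ 2))))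
    (Q : Fin G → ℕ → (Fin p → ℝ) → ℝ)
    (hQ : ∀ g n x, Q g n x =
      stdNormalQuantile (1 / (2 * (1 - min (1 / 2) (l g n x)))))
    (med : ℕ → (Fin p → ℝ) → (Fin p → ℝ))
    (hmed : ∀ n x i, med n x i =
      if 1 / 2 ≤ l (gr i) n x then 0
      else Real.sign (x i) *
        max ((1 - B (gr i) n) * |x i| -
          σ / Real.sqrt (n : ℝ) * Q (gr i) n x * Real.sqrt (1 - B (gr i) n)) 0) :
    ∀ φ : BoundedContinuousFunction
        ({i : Fin p // ∃ i', gr i' = gr i ∧ β0 i' ≠ 0} → ℝ) ℝ,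
      Tendsto
        (fun n => ∫ x,
          φ (fun i => Real.sqrt (n : ℝ) * (med n x i.1 - β0 i.1)) ∂(μ n))
        atTop
        (nhds (∫ y, φ y ∂(Measure.pi
          (fun _ : {i : Fin p // ∃ i', gr i' = gr i ∧ β0 i' ≠ 0} =>
            gaussianReal 0 ⟨σ ^ 2, sq_nonneg σ⟩)))) :=
  median_thresholding_asymptotic_normality_general p G gr β0 σ hσ π₀ hπ₀ hπ₁ τ2 hτ2 hτlim hτlog μ hμ
    bnorm hbnorm B hB l hl Q hQ med hmed
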